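/- arXiv:0906.5560 — 4 statements merged into one kernel-verified Lean document; each statement's English description precedes it below -/
import Mathlib

section
/- Poisson generator correctness. Let λ ∈ (0,1). Suppose N is a random variable with P(N = n) = (1−λ)λⁿ for all n ∈ ℕ, and A is an event with P(A | N = n) = 1/n! for every n (acceptance iff the N auxiliary uniform variables are sorted increasingly). Then P(N = n | A) = e^{−λ} λⁿ/n! for every n ∈ ℕ; that is, conditionally on acceptance, N has the Poisson distribution of parameter λ. -/
open MeasureTheory ProbabilityTheory
open scoped ENNReal Nat

/-! By Bayes' formula over the values of `N`, `P(N = n | A)` is the joint weight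
`P(A, N = n) = (1 - λ) λⁿ / n!` divided by their total `(1 - λ) e^λ`; the geometric factor
`1 - λ` cancels, leaving the Poisson weight `e^{-λ} λⁿ / n!`. -/

namespace ProbabilityTheory

variable {Ω α : Type*} [MeasurableSpace Ω] [MeasurableSpace α] [Countable α]
  [MeasurableSingletonClass α] {X : Ω → α} {t : Set Ω}

theorem tsum_cond_mul_measure_fiber (μ : Measure Ω) [IsFiniteMeasure μ] (hX : Measurable X)
    (ht : MeasurableSet t) :
    ∑' x, μ[t | {ω | X ω = x}] * μ {ω | X ω = x} = μ t := by
  have hfiber (x : α) : MeasurableSet {ω | X ω = x} := hX (measurableSet_singleton x)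
  have hdisj : Pairwise (Function.onFun Disjoint fun x => {ω | X ω = x} ∩ t) :=
    fun x y hxy => Set.disjoint_left.2 fun ω hx hy => hxy (hx.1.symm.trans hy.1)
  calc ∑' x, μ[t | {ω | X ω = x}] * μ {ω | X ω = x}
      = ∑' x, μ ({ω | X ω = x} ∩ t) := by simp_rw [cond_mul_eq_inter (hfiber _)]
    _ = μ (⋃ x, {ω | X ω = x} ∩ t) := (measure_iUnion hdisj fun x => (hfiber x).inter ht).symm
    _ = μ t := by congr 1; ext ω; simp

theorem cond_fiber_eq_div_tsum (μ : Measure Ω) [IsFiniteMeasure μ] (hX : Measurable X)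
    (ht : MeasurableSet t) (x : α) :
    μ[{ω | X ω = x} | t] = μ[t | {ω | X ω = x}] * μ {ω | X ω = x}
      / ∑' y, μ[t | {ω | X ω = y}] * μ {ω | X ω = y} := by
  rw [tsum_cond_mul_measure_fiber μ hX ht, cond_eq_inv_mul_cond_mul (t := {ω | X ω = x}) ht
    (hX (measurableSet_singleton x)), mul_assoc, ENNReal.div_eq_inv_mul]

end ProbabilityTheory

/-- Poisson generator correctness.  If `N` is geometric, `P(N = n) = (1-λ)λⁿ`,
and `A` is an acceptance event with `P(A | N = n) = 1/n!` for all `n`, then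
conditionally on `A`, `N` is Poisson(λ): `P(N = n | A) = e^{-λ} λⁿ/n!`. -/
theorem stmt6 {Ω : Type*} [MeasurableSpace Ω] (μ : Measure Ω) [IsProbabilityMeasure μ]
    (lam : ℝ) (hl0 : 0 < lam) (hl1 : lam < 1)
    (N : Ω → ℕ) (hN : Measurable N) (A : Set Ω) (hA : MeasurableSet A)
    (hgeo : ∀ n : ℕ, μ {ω | N ω = n} = ENNReal.ofReal ((1 - lam) * lam ^ n))
    (hcond : ∀ n : ℕ, μ[|{ω | N ω = n}] A = ((n ! : ℝ≥0∞))⁻¹) :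
    ∀ n : ℕ, μ[|A] {ω | N ω = n}
      = ENNReal.ofReal (Real.exp (-lam) * lam ^ n / n !) := by
  intro n
  have h1 : 0 < 1 - lam := sub_pos.2 hl1
  have hjoint (k : ℕ) : μ[A | {ω | N ω = k}] * μ {ω | N ω = k}
      = ENNReal.ofReal ((1 - lam) * (lam ^ k / k !)) := by
    rw [hcond, hgeo, ← ENNReal.ofReal_natCast, ← ENNReal.ofReal_inv_of_pos (by positivity),
      ← ENNReal.ofReal_mul (by positivity)]
    ring_nf
  have hsum : HasSum (fun k : ℕ => (1 - lam) * (lam ^ k / k !)) ((1 - lam) * Real.exp lam) := by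
    rw [Real.exp_eq_exp_ℝ]
    exact (NormedSpace.expSeries_div_hasSum_exp lam).mul_left _
  rw [cond_fiber_eq_div_tsum μ hN hA, tsum_congr hjoint, hjoint,
    ← ENNReal.ofReal_tsum_of_nonneg (fun k => by positivity) hsum.summable, hsum.tsum_eq,
    ← ENNReal.ofReal_div_of_pos (by positivity), Real.exp_neg]
  field_simp
end

section
/- Lagrange-inversion identity for the generalized square-root construction. Let t ≥ 2 be an integer and work in the ring of formal power series ℚ[[z]]. There is a unique formal power series Y with zero constant term satisfying Y = z + z·Y^t, and for this Y one has the identity ∑_{n≥0} binom(tn, n) z^{tn} = 1/(1 − t·z·Y^{t−1}), i.e. (1 − t·z·Y(z)^{t−1}) · ∑_{n≥0} binom(tn,n) z^{tn} = 1. In particular, for t = 3, with Y = z + zY³ (the generating function of ternary trees), ∑_{n≥0} binom(3n,n) z^{3n} = 1/(1 − 3zY(z)²). -/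
/-!
Lagrange inversion in its second form: if `Y = z φ(Y)` for a polynomial `φ`, then
`[z^m] p(Y) / (1 - z φ'(Y)) = [u^m] p(u) φ(u)^m` for every polynomial `p`. This is proved by
strong induction on `m`, for all `p` at once: for `p = u^(k+1)`, rewriting
`Y^(k+1) = z^(k+1) φ(Y)^(k+1)` lowers `m` by `k + 1`; for `p = 1`, the identity
`1/(1 - z φ'(Y)) = 1 + z φ'(Y)/(1 - z φ'(Y))` lowers it by one, and
`[u^m] (φ^(m+1))' = (m+1) [u^(m+1)] φ^(m+1)` closes the step.
For `φ = 1 + u^t`, `[u^m] (1 + u^t)^m = binom(m, m/t)` if `t ∣ m` and `0` otherwise.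
`Y` exists and is unique because `Y ↦ z φ(Y)` raises the `z`-adic order of differences.
-/

open PowerSeries

theorem Polynomial.coeff_derivative_mul_pow_self {K : Type*} [Field K] [CharZero K]
    (φ : Polynomial K) (n : ℕ) :
    (Polynomial.derivative φ * φ ^ n).coeff n = (φ ^ (n + 1)).coeff (n + 1) := by
  have h := Polynomial.coeff_derivative (φ ^ (n + 1)) n
  rw [Polynomial.derivative_pow, Nat.add_sub_cancel, mul_assoc, Polynomial.coeff_C_mul,
    mul_comm (φ ^ n)] at h
  have hn : (n : K) + 1 ≠ 0 := n.cast_add_one_ne_zero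
  push_cast at h
  exact mul_right_cancel₀ hn (by rw [← h, mul_comm])

theorem Polynomial.coeff_one_add_X_pow_pow {R : Type*} [CommSemiring R] {t : ℕ} (ht : 0 < t)
    (m n : ℕ) :
    ((1 + Polynomial.X ^ t) ^ m : Polynomial R).coeff n =
      if t ∣ n then (m.choose (n / t) : R) else 0 := by
  have h : (1 + Polynomial.X ^ t) ^ m = Polynomial.expand R t ((1 + Polynomial.X) ^ m) := by
    simp
  rw [h, Polynomial.coeff_expand ht, Polynomial.coeff_one_add_X_pow]

namespace PowerSeries

section FixedPoint

variable {R : Type*} [CommRing R]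

theorem eq_zero_of_forall_X_pow_dvd {f : R⟦X⟧} (h : ∀ n, X ^ n ∣ f) : f = 0 := by
  ext n
  exact X_pow_dvd_iff.mp (h (n + 1)) n n.lt_succ_self

theorem sub_dvd_aeval_sub (p : Polynomial R) (f g : R⟦X⟧) :
    f - g ∣ Polynomial.aeval f p - Polynomial.aeval g p := by
  simpa only [← Polynomial.eval_map_algebraMap] using Polynomial.sub_dvd_eval_sub f g _

theorem X_pow_succ_dvd_X_mul_aeval_sub (p : Polynomial R) {f g : R⟦X⟧} {n : ℕ}
    (h : X ^ n ∣ f - g) :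
    X ^ (n + 1) ∣ X * Polynomial.aeval f p - X * Polynomial.aeval g p := by
  rw [pow_succ', ← mul_sub]
  exact mul_dvd_mul_left X (h.trans (sub_dvd_aeval_sub p f g))

theorem eq_of_eq_X_mul_aeval (p : Polynomial R) {f g : R⟦X⟧}
    (hf : f = X * Polynomial.aeval f p) (hg : g = X * Polynomial.aeval g p) : f = g := by
  refine sub_eq_zero.mp (eq_zero_of_forall_X_pow_dvd fun n => ?_)
  induction n with
  | zero => exact one_dvd _
  | succ n ih =>
    have h := X_pow_succ_dvd_X_mul_aeval_sub p ih
    rwa [← hf, ← hg] at h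

theorem exists_eq_X_mul_aeval (p : Polynomial R) :
    ∃ f : R⟦X⟧, f = X * Polynomial.aeval f p := by
  obtain ⟨u, hu⟩ : ∃ u : ℕ → R⟦X⟧, ∀ n, u (n + 1) = X * Polynomial.aeval (u n) p :=
    ⟨fun n => (fun f => X * Polynomial.aeval f p)^[n] 0,
      fun n => Function.iterate_succ_apply' _ n 0⟩
  have hstep : ∀ n, X ^ n ∣ u (n + 1) - u n := by
    intro n
    induction n with
    | zero => exact one_dvd _
    | succ n ih => simpa only [hu] using X_pow_succ_dvd_X_mul_aeval_sub p ih
  have hcauchy : ∀ n k, X ^ n ∣ u (n + k) - u n := by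
    intro n k
    induction k with
    | zero => simp
    | succ k ih =>
      have h := (pow_dvd_pow X (n.le_add_right k)).trans (hstep (n + k))
      simpa [← add_assoc] using dvd_add h ih
  set f : R⟦X⟧ := mk fun m => coeff m (u (m + 1))
  have hf : ∀ n, X ^ n ∣ f - u n := by
    intro n
    refine X_pow_dvd_iff.mpr fun m hm => ?_
    obtain ⟨k, rfl⟩ := Nat.exists_eq_add_of_lt hm
    have h := X_pow_dvd_iff.mp (hcauchy (m + 1) k) m m.lt_succ_self
    rw [map_sub, sub_eq_zero] at h ⊢
    simpa [f, add_right_comm] using h.symm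
  refine ⟨f, (sub_eq_zero.mp (eq_zero_of_forall_X_pow_dvd fun n => ?_)).symm⟩
  cases n with
  | zero => exact one_dvd _
  | succ n =>
    have h := dvd_sub (X_pow_succ_dvd_X_mul_aeval_sub p (hf n)) (hf (n + 1))
    rwa [← hu, sub_sub_sub_cancel_right] at h

end FixedPoint

section Lagrange

variable {K : Type*} [Field K] [CharZero K]

theorem coeff_aeval_mul_inv_of_eq_X_mul_aeval {φ : Polynomial K} {Y : K⟦X⟧}
    (hY : Y = X * Polynomial.aeval Y φ) (p : Polynomial K) (m : ℕ) :
    coeff m (Polynomial.aeval Y p * (1 - X * Polynomial.aeval Y (Polynomial.derivative φ))⁻¹) =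
      (p * φ ^ m).coeff m := by
  set D := 1 - X * Polynomial.aeval Y (Polynomial.derivative φ) with hD
  have hDinv : D * D⁻¹ = 1 := PowerSeries.mul_inv_cancel D (by simp [D])
  induction m using Nat.strong_induction_on generalizing p with
  | _ m ih =>
  suffices hmon : ∀ k, coeff m (Y ^ k * D⁻¹) = (Polynomial.X ^ k * φ ^ m).coeff m by
    induction p using Polynomial.induction_on' with
    | add p q hp hq => simp [add_mul, hp, hq]
    | monomial k a => simp [← Polynomial.C_mul_X_pow_eq_monomial, mul_assoc, hmon]
  rintro (_ | k)
  · have hinv : D⁻¹ = 1 + X * (Polynomial.aeval Y (Polynomial.derivative φ) * D⁻¹) := by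
      linear_combination hDinv + D⁻¹ * hD
    rw [pow_zero, one_mul, hinv, map_add]
    cases m with
    | zero => simp
    | succ j =>
      rw [coeff_succ_X_mul, ih j j.lt_succ_self]
      simp [Polynomial.coeff_derivative_mul_pow_self]
  · have hYk :
        Y ^ (k + 1) * D⁻¹ = X ^ (k + 1) * (Polynomial.aeval Y (φ ^ (k + 1)) * D⁻¹) := by
      rw [map_pow, ← mul_assoc, ← mul_pow, ← hY]
    rw [hYk, coeff_X_pow_mul', Polynomial.coeff_X_pow_mul']
    split_ifs with hk
    · rw [ih (m - (k + 1)) (by omega), ← pow_add, Nat.add_sub_cancel' hk]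
    · rfl

theorem mul_mk_coeff_pow_self_eq_one_of_eq_X_mul_aeval {φ : Polynomial K} {Y : K⟦X⟧}
    (hY : Y = X * Polynomial.aeval Y φ) :
    (1 - X * Polynomial.aeval Y (Polynomial.derivative φ)) * mk (fun m => (φ ^ m).coeff m) =
      1 := by
  have h : mk (fun m => (φ ^ m).coeff m) =
      (1 - X * Polynomial.aeval Y (Polynomial.derivative φ))⁻¹ := by
    ext m
    simpa using (coeff_aeval_mul_inv_of_eq_X_mul_aeval hY 1 m).symm
  rw [h, PowerSeries.mul_inv_cancel]
  simp

end Lagrange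

end PowerSeries

/-- Lagrange-inversion identity for the generalized square-root construction.
In `ℚ⟦z⟧`, there is a unique power series `Y` with zero constant term such that
`Y = z + z Y^t`, and for it `(1 - t z Y^{t-1}) · ∑_{n≥0} binom(tn,n) z^{tn} = 1`. -/
theorem stmt11 (t : ℕ) (ht : 2 ≤ t) :
    (∃! Y : PowerSeries ℚ, constantCoeff Y = 0 ∧ Y = X + X * Y ^ t) ∧
    ∀ Y : PowerSeries ℚ, constantCoeff Y = 0 → Y = X + X * Y ^ t →
      (1 - (t : PowerSeries ℚ) * X * Y ^ (t - 1)) *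
          PowerSeries.mk (fun k => if t ∣ k then ((k.choose (k / t) : ℚ)) else 0)
        = 1 := by
  set φ : Polynomial ℚ := 1 + Polynomial.X ^ t
  have hφ : ∀ Y : ℚ⟦X⟧, X * Polynomial.aeval Y φ = X + X * Y ^ t := fun Y => by
    simp [φ, mul_add]
  refine ⟨?_, fun Y _ hY => ?_⟩
  · obtain ⟨Y, hY⟩ := exists_eq_X_mul_aeval φ
    refine ⟨Y, ⟨?_, hY.trans (hφ Y)⟩,
      fun Z hZ => eq_of_eq_X_mul_aeval φ (hZ.2.trans (hφ Z).symm) hY⟩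
    rw [hY, map_mul, constantCoeff_X, zero_mul]
  · have hD : (t : ℚ⟦X⟧) * X * Y ^ (t - 1) =
        X * Polynomial.aeval Y (Polynomial.derivative φ) := by
      simp only [φ, Polynomial.derivative_add, Polynomial.derivative_one,
        Polynomial.derivative_X_pow, zero_add, map_natCast, map_mul, map_pow, Polynomial.aeval_X]
      ring
    have hS : mk (fun k => if t ∣ k then ((k.choose (k / t) : ℚ)) else 0) =
        mk fun m => (φ ^ m).coeff m := by
      ext m
      simp [φ, Polynomial.coeff_one_add_X_pow_pow (by omega : 0 < t)]
    rw [hD, hS]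
    exact mul_mk_coeff_pow_self_eq_one_of_eq_X_mul_aeval (hY.trans (hφ Y).symm)
end

section
/- Distribution of T in the Rama procedure. Let X₁ and X₂ be independent random variables, each with the geometric distribution P(X = k) = (3/4)·(1/4)^k on ℕ, and let B be a Bernoulli random variable independent of X₁, X₂ with P(B = 1) = 5/9. Then T := X₁ + X₂ + B satisfies P(T = n) = (6n+1)/4^{n+1} for every n ∈ ℕ. -/
open MeasureTheory ProbabilityTheory
open scoped ENNReal

open Finset

/-!
Convolving the two geometric laws, each of the `m + 1` ways of writing `m = i + j` has
probability `(3/4)² (1/4)^m`, so `S = X₁ + X₂` has `P(S = m) = (m + 1) (3/4)² (1/4)^m`.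
Since `B` is a Bernoulli variable independent of `S`,
`P(T = n + 1) = P(S = n + 1) · 4/9 + P(S = n) · 5/9`, which simplifies to
`(6 (n + 1) + 1) / 4^(n + 2)`.
-/

namespace ProbabilityTheory

variable {Ω : Type*} [MeasurableSpace Ω] {μ : Measure Ω}

theorem IndepFun.measure_add_eq_sum_antidiagonal {M : Type*} [AddMonoid M]
    [HasAntidiagonal M] [MeasurableSpace M] [MeasurableSingletonClass M] {X Y : Ω → M}
    (hXY : IndepFun X Y μ) (hX : Measurable X) (hY : Measurable Y) (n : M) :
    μ {ω | X ω + Y ω = n}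
      = ∑ p ∈ antidiagonal n, μ {ω | X ω = p.1} * μ {ω | Y ω = p.2} := by
  have hunion : {ω | X ω + Y ω = n}
      = ⋃ p ∈ antidiagonal n, X ⁻¹' {p.1} ∩ Y ⁻¹' {p.2} := by
    ext ω
    simp
  rw [hunion, measure_biUnion_finset]
  · exact sum_congr rfl fun p _ ↦ hXY.measure_inter_preimage_eq_mul _ _
      (measurableSet_singleton _) (measurableSet_singleton _)
  · rintro p - q - hpq
    refine Set.disjoint_left.2 fun ω hp hq ↦ hpq ?_
    simp only [Set.mem_inter_iff, Set.mem_preimage, Set.mem_singleton_iff] at hp hq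
    exact Prod.ext (hp.1 ▸ hq.1) (hp.2 ▸ hq.2)
  · exact fun p _ ↦ (hX (measurableSet_singleton _)).inter (hY (measurableSet_singleton _))

theorem IndepFun.measure_add_eq_of_geometric {X Y : Ω → ℕ} (hXY : IndepFun X Y μ)
    (hX : Measurable X) (hY : Measurable Y) {a r : ℝ} (ha : 0 ≤ a) (hr : 0 ≤ r)
    (hXk : ∀ k, μ {ω | X ω = k} = ENNReal.ofReal (a * r ^ k))
    (hYk : ∀ k, μ {ω | Y ω = k} = ENNReal.ofReal (a * r ^ k)) (n : ℕ) :
    μ {ω | X ω + Y ω = n} = ENNReal.ofReal ((n + 1) * a ^ 2 * r ^ n) := by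
  have hterm : ∀ p ∈ antidiagonal n,
      μ {ω | X ω = p.1} * μ {ω | Y ω = p.2} = ENNReal.ofReal (a ^ 2 * r ^ n) := by
    intro p hp
    rw [hXk, hYk, ← ENNReal.ofReal_mul (by positivity), ← HasAntidiagonal.mem_antidiagonal.1 hp]
    ring_nf
  rw [hXY.measure_add_eq_sum_antidiagonal hX hY, sum_congr rfl hterm, sum_const,
    Nat.card_antidiagonal, nsmul_eq_mul, mul_assoc, ← ENNReal.ofReal_natCast,
    ← ENNReal.ofReal_mul (by positivity)]
  norm_cast

theorem IndepFun.measure_add_eq_zero {X Y : Ω → ℕ} (hXY : IndepFun X Y μ)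
    (hX : Measurable X) (hY : Measurable Y) :
    μ {ω | X ω + Y ω = 0} = μ {ω | X ω = 0} * μ {ω | Y ω = 0} := by
  rw [hXY.measure_add_eq_sum_antidiagonal hX hY, Nat.antidiagonal_zero, sum_singleton]

theorem IndepFun.measure_add_eq_succ_of_bernoulli {Y B : Ω → ℕ} (hYB : IndepFun Y B μ)
    (hY : Measurable Y) (hB : Measurable B) (hB01 : ∀ ω, B ω = 0 ∨ B ω = 1) (n : ℕ) :
    μ {ω | Y ω + B ω = n + 1}
      = μ {ω | Y ω = n + 1} * μ {ω | B ω = 0} + μ {ω | Y ω = n} * μ {ω | B ω = 1} := by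
  rw [hYB.measure_add_eq_sum_antidiagonal hY hB]
  refine sum_eq_add_of_mem (n + 1, 0) (n, 1) (by simp) (by simp) (by simp) ?_
  rintro ⟨i, j⟩ hij ⟨hi, hj⟩
  have hj : j ≠ 0 ∧ j ≠ 1 := by
    simp only [HasAntidiagonal.mem_antidiagonal, ne_eq, Prod.mk.injEq] at hij hi hj
    omega
  have hempty : {ω | B ω = j} = ∅ :=
    Set.eq_empty_of_forall_notMem fun ω hω ↦ by rcases hB01 ω with h | h <;> simp_all
  rw [hempty, measure_empty, mul_zero]

theorem measure_eq_zero_eq_one_sub_of_bernoulli [IsProbabilityMeasure μ] {B : Ω → ℕ}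
    (hB : Measurable B) (hB01 : ∀ ω, B ω = 0 ∨ B ω = 1) :
    μ {ω | B ω = 0} = 1 - μ {ω | B ω = 1} := by
  have hcompl : {ω | B ω = 0} = {ω | B ω = 1}ᶜ := by
    ext ω
    rcases hB01 ω with h | h <;> simp [h]
  rw [hcompl, prob_compl_eq_one_sub (measurableSet_eq_fun hB measurable_const)]

end ProbabilityTheory

/-- Distribution of `T` in the Rama procedure.  If `X₁, X₂` are independent
geometric variables with `P(X = k) = (3/4)(1/4)^k`, and `B` is an independent
Bernoulli variable with `P(B = 1) = 5/9`, then `T = X₁ + X₂ + B` satisfies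
`P(T = n) = (6n+1)/4^{n+1}` for every `n ∈ ℕ`. -/
theorem stmt13 {Ω : Type*} [MeasurableSpace Ω] (μ : Measure Ω) [IsProbabilityMeasure μ]
    (X₁ X₂ B : Ω → ℕ)
    (h1 : Measurable X₁) (h2 : Measurable X₂) (hBm : Measurable B)
    (hindep : iIndepFun ![X₁, X₂, B] μ)
    (hX1 : ∀ k : ℕ, μ {ω | X₁ ω = k} = ENNReal.ofReal ((3 / 4) * (1 / 4) ^ k))
    (hX2 : ∀ k : ℕ, μ {ω | X₂ ω = k} = ENNReal.ofReal ((3 / 4) * (1 / 4) ^ k))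
    (hB01 : ∀ ω, B ω = 0 ∨ B ω = 1)
    (hB1 : μ {ω | B ω = 1} = ENNReal.ofReal (5 / 9)) :
    ∀ n : ℕ, μ {ω | X₁ ω + X₂ ω + B ω = n}
      = ENNReal.ofReal ((6 * (n : ℝ) + 1) / 4 ^ (n + 1)) := by
  have hmeas : ∀ i, Measurable (![X₁, X₂, B] i) := fun i ↦ by fin_cases i <;> assumption
  have hS : ∀ m : ℕ, μ {ω | X₁ ω + X₂ ω = m}
      = ENNReal.ofReal ((m + 1) * (3 / 4) ^ 2 * (1 / 4) ^ m) :=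
    (hindep.indepFun (i := 0) (j := 1) (by decide)).measure_add_eq_of_geometric h1 h2
      (by norm_num) (by norm_num) hX1 hX2
  have hSB : IndepFun (fun ω ↦ X₁ ω + X₂ ω) B μ :=
    hindep.indepFun_add_left hmeas 0 1 2 (by decide) (by decide)
  have hB0 : μ {ω | B ω = 0} = ENNReal.ofReal (4 / 9) := by
    rw [measure_eq_zero_eq_one_sub_of_bernoulli hBm hB01, hB1, ← ENNReal.ofReal_one,
      ← ENNReal.ofReal_sub _ (by norm_num)]
    norm_num
  rintro (_ | n)
  · rw [hSB.measure_add_eq_zero (h1.add h2) hBm, hS, hB0, ← ENNReal.ofReal_mul (by positivity)]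
    norm_num
  · rw [hSB.measure_add_eq_succ_of_bernoulli (h1.add h2) hBm hB01, hS, hS, hB0, hB1,
      ← ENNReal.ofReal_mul (by positivity), ← ENNReal.ofReal_mul (by positivity),
      ← ENNReal.ofReal_add (by positivity) (by positivity)]
    congr 1
    simp only [one_div, inv_pow]
    field_simp
    push_cast
    ring
end

section
/- Expected path length of a random trie. Let n ≥ 2 and let X₁,…,Xₙ be independent random infinite binary strings, each with independent uniform {0,1} bits (i.e. each Xᵢ is uniform on {0,1}^ℕ under the product of Bernoulli(1/2) measures). For each i, let Dᵢ := min{ℓ ∈ ℕ : for all j ≠ i, the first ℓ bits of Xᵢ differ as a vector from the first ℓ bits of Xⱼ} (the depth of key i in the trie built from X₁,…,Xₙ, i.e. the number of bits of Xᵢ examined). Then each Dᵢ is almost surely finite and the expected path length satisfies E[D₁ + ⋯ + Dₙ] = n·∑_{k=0}^{∞} [1 − (1 − 2^{−k})^{n−1}]; in particular this expectation is finite. -/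
/-!
Key `i` has depth `> k` exactly when its first `k` bits agree with those of some other key.
The `k`-bit prefixes of the `n` keys are `n k` independent fair bits, hence uniform on the
`2 ^ (n k)` patterns, and counting the patterns in which row `i` differs from every other row
gives `P(Dᵢ ≤ k) = (1 - 2^{-k})^{n-1}`. Letting `k → ∞` shows that `Dᵢ` is a.s. finite, and
`E[Dᵢ] = ∑ₖ P(Dᵢ > k)` together with linearity of expectation gives the formula.
-/

open MeasureTheory ProbabilityTheory Finset Filter Topology
open scoped ENNReal

lemma card_filter_forall_ne_apply {ι α : Type*} [Fintype ι] [DecidableEq ι] [Fintype α] (i : ι)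
    [DecidablePred fun g : ι → α => ∀ j ≠ i, g j ≠ g i] :
    #{g : ι → α | ∀ j ≠ i, g j ≠ g i} =
      Fintype.card α * (Fintype.card α - 1) ^ (Fintype.card ι - 1) := by
  classical
  rw [card_eq_sum_card_fiberwise (f := fun g => g i) (t := univ)
    fun _ _ => mem_coe.2 (mem_univ _)]
  have hfiber : ∀ v : α, {g ∈ ({g : ι → α | ∀ j ≠ i, g j ≠ g i} : Finset _) | g i = v}
      = Fintype.piFinset fun j => if j = i then {v} else {v}ᶜ := by
    intro v
    ext g
    simp only [mem_filter, mem_univ, true_and, Fintype.mem_piFinset]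
    constructor
    · rintro ⟨hg, rfl⟩ j
      split_ifs with hj
      · simp [hj]
      · simpa using hg j hj
    · intro hg
      have hv : g i = v := by simpa using hg i
      refine ⟨fun j hj => ?_, hv⟩
      simpa [hj, hv] using hg j
  simp only [hfiber, Fintype.card_piFinset, apply_ite card, card_singleton, card_compl,
    sum_const, card_univ, smul_eq_mul]
  rw [Finset.prod_ite, prod_const_one, one_mul, prod_const, filter_ne',
    card_erase_of_mem (mem_univ i), card_univ]

lemma one_sub_one_sub_pow_le {x : ℝ} (hx : x ≤ 2) (m : ℕ) : 1 - (1 - x) ^ m ≤ m * x := by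
  have := one_add_mul_le_pow (a := -x) (by linarith) m
  rw [← sub_eq_add_neg] at this
  linarith

lemma half_pow_le_one (k : ℕ) : (1 / 2 : ℝ) ^ k ≤ 1 := pow_le_one₀ (by norm_num) (by norm_num)

lemma one_sub_one_sub_half_pow_pow_nonneg (k m : ℕ) : 0 ≤ 1 - (1 - (1 / 2 : ℝ) ^ k) ^ m :=
  sub_nonneg.2 <| pow_le_one₀ (sub_nonneg.2 (half_pow_le_one k)) (sub_le_self _ (by positivity))

lemma summable_one_sub_one_sub_half_pow_pow (m : ℕ) :
    Summable fun k : ℕ => 1 - (1 - (1 / 2 : ℝ) ^ k) ^ m :=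
  (summable_geometric_two.mul_left (m : ℝ)).of_nonneg_of_le
    (one_sub_one_sub_half_pow_pow_nonneg · m)
    fun k => one_sub_one_sub_pow_le (by linarith [half_pow_le_one k]) m

lemma ofReal_one_sub_one_sub_half_pow_pow (k m : ℕ) :
    ENNReal.ofReal (1 - (1 - (1 / 2 : ℝ) ^ k) ^ m) = 1 - (1 - 2⁻¹ ^ k) ^ m := by
  rw [ENNReal.ofReal_sub _ (pow_nonneg (sub_nonneg.2 (half_pow_le_one k)) _),
    ENNReal.ofReal_pow (sub_nonneg.2 (half_pow_le_one k)), ENNReal.ofReal_sub _ (by positivity),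
    ENNReal.ofReal_pow (by norm_num), one_div, ENNReal.ofReal_inv_of_pos two_pos,
    ENNReal.ofReal_ofNat, ENNReal.ofReal_one]

section FairBits

variable {Ω ι : Type*} [MeasurableSpace Ω] {μ : Measure Ω} [IsProbabilityMeasure μ]

lemma measure_eq_bool_of_fair {Z : Ω → Bool} (hZ : Measurable Z)
    (hfair : μ {ω | Z ω = true} = 1 / 2) (b : Bool) : μ {ω | Z ω = b} = 2⁻¹ := by
  cases b
  · have hcompl : {ω | Z ω = false} = {ω | Z ω = true}ᶜ := by ext; simp
    have htrue : MeasurableSet {ω | Z ω = true} := hZ (measurableSet_singleton true)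
    rw [hcompl, prob_compl_eq_one_sub htrue, hfair, one_div, ENNReal.one_sub_inv_two]
  · rw [hfair, one_div]

variable [Fintype ι] {Y : ι → Ω → Bool}

lemma measure_bits_eq (hY : ∀ i, Measurable (Y i)) (hindep : iIndepFun Y μ)
    (hfair : ∀ i, μ {ω | Y i ω = true} = 1 / 2) (a : ι → Bool) :
    μ {ω | ∀ i, Y i ω = a i} = 2⁻¹ ^ Fintype.card ι := by
  rw [Set.ofPred_forall, hindep.meas_iInter (s := fun i => {ω | Y i ω = a i})
    fun i => ⟨{a i}, measurableSet_singleton _, rfl⟩]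
  simp only [measure_eq_bool_of_fair (hY _) (hfair _), prod_const, card_univ]

lemma measure_bits_mem (hY : ∀ i, Measurable (Y i)) (hindep : iIndepFun Y μ)
    (hfair : ∀ i, μ {ω | Y i ω = true} = 1 / 2) (A : Finset (ι → Bool)) :
    μ {ω | (fun i => Y i ω) ∈ A} = #A * 2⁻¹ ^ Fintype.card ι := by
  have hV : Measurable fun ω i => Y i ω := measurable_pi_lambda _ hY
  have hfiber : ∀ a : ι → Bool, (fun ω i => Y i ω) ⁻¹' {a} = {ω | ∀ i, Y i ω = a i} := by
    intro a; ext ω; simp [funext_iff]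
  change μ ((fun ω i => Y i ω) ⁻¹' A) = _
  rw [← sum_measure_preimage_singleton A fun a _ => hV (measurableSet_singleton a)]
  simp only [hfiber, measure_bits_eq hY hindep hfair, sum_const, nsmul_eq_mul]

end FairBits

section FirstIndex

variable {α : Type*}

-- `sInf ∅ = 0` is why the right-hand side is cut down to `⋃ ℓ, s ℓ`.
lemma setOf_lt_sInf_mem {s : ℕ → Set α} (hs : Monotone s) (k : ℕ) :
    {x | k < sInf {ℓ | x ∈ s ℓ}} = (⋃ ℓ, s ℓ) \ s k := by
  ext x
  simp only [Set.mem_ofPred_eq, Set.mem_sdiff, Set.mem_iUnion]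
  by_cases hx : ∃ ℓ, x ∈ s ℓ
  · classical
    rw [Nat.sInf_def (s := {ℓ | x ∈ s ℓ}) hx, Nat.lt_find_iff]
    exact ⟨fun h => ⟨hx, h k le_rfl⟩, fun h m hm hxm => h.2 (hs hm hxm)⟩
  · have hempty : {ℓ | x ∈ s ℓ} = ∅ := Set.eq_empty_of_forall_notMem fun ℓ hℓ => hx ⟨ℓ, hℓ⟩
    simp [hempty, hx]

variable [MeasurableSpace α] {μ : Measure α}

lemma measurable_sInf_mem {s : ℕ → Set α} (hs : Monotone s) (hms : ∀ ℓ, MeasurableSet (s ℓ)) :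
    Measurable fun x => sInf {ℓ | x ∈ s ℓ} :=
  measurable_of_Ioi fun k => by
    simpa only [Set.preimage, Set.mem_Ioi, setOf_lt_sInf_mem hs k] using
      (MeasurableSet.iUnion hms).diff (hms k)

lemma lintegral_natCast_eq_tsum {f : α → ℕ} (hf : Measurable f) :
    ∫⁻ x, (f x : ℝ≥0∞) ∂μ = ∑' k, μ {x | k < f x} := by
  have hcount : ∀ x, (f x : ℝ≥0∞) = ∑' k, {y | k < f y}.indicator (fun _ => 1) x := by
    intro x
    simp only [Set.indicator_apply, Set.mem_ofPred_eq]
    rw [tsum_eq_sum (s := range (f x)) fun k hk => if_neg (by simpa using hk),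
      sum_congr rfl fun k hk => if_pos (mem_range.1 hk)]
    simp
  have hms : ∀ k, MeasurableSet {x | k < f x} := fun k => hf measurableSet_Ioi
  simp_rw [hcount]
  rw [lintegral_tsum fun k => (measurable_const.indicator (hms k)).aemeasurable]
  simp only [lintegral_indicator_const (hms _), one_mul]

lemma lintegral_sInf_mem {s : ℕ → Set α} (hs : Monotone s) (hms : ∀ ℓ, MeasurableSet (s ℓ)) :
    ∫⁻ x, ((sInf {ℓ | x ∈ s ℓ} : ℕ) : ℝ≥0∞) ∂μ = ∑' k, μ ((⋃ ℓ, s ℓ) \ s k) := by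
  simp_rw [lintegral_natCast_eq_tsum (measurable_sInf_mem hs hms), setOf_lt_sInf_mem hs]

end FirstIndex

section Trie

variable {Ω : Type*} {n : ℕ} (X : Fin n → Ω → ℕ → Bool)

def separatedBy (i : Fin n) (ℓ : ℕ) : Set Ω :=
  {ω | ∀ j, j ≠ i → ∃ m < ℓ, X i ω m ≠ X j ω m}

lemma separatedBy_mono (i : Fin n) : Monotone (separatedBy X i) :=
  fun _ _ hkl _ hω j hj => (hω j hj).imp fun _ ⟨hm, hne⟩ => ⟨hm.trans_le hkl, hne⟩

lemma separatedBy_eq_setOf_prefix (i : Fin n) (k : ℕ) :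
    separatedBy X i k =
      {ω | (fun j (m : Fin k) => X j ω m) ∈ ({g | ∀ j ≠ i, g j ≠ g i} : Finset _)} := by
  ext ω
  simp only [separatedBy, Set.mem_ofPred_eq, mem_filter, mem_univ, true_and, ne_eq,
    funext_iff, not_forall, Fin.exists_iff]
  exact forall₂_congr fun j _ => by simp only [exists_prop, eq_comm]

variable {X} [MeasurableSpace Ω]

lemma measurableSet_separatedBy (hmeas : ∀ i k, Measurable fun ω => X i ω k) (i : Fin n)
    (k : ℕ) : MeasurableSet (separatedBy X i k) := by
  rw [separatedBy_eq_setOf_prefix]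
  exact (measurable_pi_lambda (fun ω j (m : Fin k) => X j ω m)
    fun j => measurable_pi_lambda _ fun m => hmeas j m)
    (Finset.measurableSet _)

variable {μ : Measure Ω} [IsProbabilityMeasure μ]

lemma measure_separatedBy (hmeas : ∀ i k, Measurable fun ω => X i ω k)
    (hindep : iIndepFun (fun p : Fin n × ℕ => fun ω => X p.1 ω p.2) μ)
    (hfair : ∀ i k, μ {ω | X i ω k = true} = 1 / 2) (i : Fin n) (k : ℕ) :
    μ (separatedBy X i k) = (1 - 2⁻¹ ^ k) ^ (n - 1) := by
  have hprefix : iIndepFun (fun (p : Fin n × Fin k) ω => X p.1 ω p.2) μ :=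
    hindep.precomp (Function.injective_id.prodMap Fin.val_injective)
  have hsep : separatedBy X i k = {ω | (fun (p : Fin n × Fin k) => X p.1 ω p.2) ∈
      ({g | ∀ j ≠ i, g j ≠ g i} : Finset (Fin n → Fin k → Bool)).map
        (Equiv.curry _ _ _).symm.toEmbedding} := by
    simp only [separatedBy_eq_setOf_prefix, mem_map_equiv, Equiv.symm_symm]
    rfl
  rw [hsep, measure_bits_mem (fun p => hmeas _ _) hprefix (fun p => hfair _ _), card_map,
    card_filter_forall_ne_apply]
  obtain ⟨m, rfl⟩ : ∃ m, n = m + 1 := Nat.exists_eq_add_one_of_ne_zero (Fin.pos i).ne'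
  have hcancel : (2 : ℝ≥0∞) ^ k * 2⁻¹ ^ k = 1 := by
    rw [← mul_pow, ENNReal.mul_inv_cancel two_ne_zero ENNReal.ofNat_ne_top, one_pow]
  have hsub : ((2 : ℝ≥0∞) ^ k - 1) * 2⁻¹ ^ k = 1 - 2⁻¹ ^ k := by
    rw [ENNReal.sub_mul fun _ _ => ENNReal.pow_ne_top (ENNReal.inv_ne_top.2 two_ne_zero),
      hcancel, one_mul]
  simp only [Fintype.card_prod, Fintype.card_fin, Fintype.card_fun, Fintype.card_bool,
    add_tsub_cancel_right, Nat.cast_mul, Nat.cast_pow, ENNReal.natCast_sub, Nat.cast_ofNat,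
    Nat.cast_one]
  calc (2 : ℝ≥0∞) ^ k * (2 ^ k - 1) ^ m * 2⁻¹ ^ ((m + 1) * k)
      = 2 ^ k * 2⁻¹ ^ k * ((2 ^ k - 1) * 2⁻¹ ^ k) ^ m := by ring
    _ = (1 - 2⁻¹ ^ k) ^ m := by rw [hcancel, hsub, one_mul]

lemma measure_iUnion_separatedBy (hmeas : ∀ i k, Measurable fun ω => X i ω k)
    (hindep : iIndepFun (fun p : Fin n × ℕ => fun ω => X p.1 ω p.2) μ)
    (hfair : ∀ i k, μ {ω | X i ω k = true} = 1 / 2) (i : Fin n) :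
    μ (⋃ ℓ, separatedBy X i ℓ) = 1 := by
  have hsep : Tendsto (fun k => (1 - (2⁻¹ : ℝ≥0∞) ^ k) ^ (n - 1)) atTop
      (𝓝 ((1 - 0) ^ (n - 1))) :=
    ((ENNReal.continuous_pow _).tendsto _).comp <| ENNReal.Tendsto.sub tendsto_const_nhds
      (ENNReal.tendsto_pow_atTop_nhds_zero_of_lt_one ENNReal.one_half_lt_one)
      (.inl ENNReal.one_ne_top)
  rw [tsub_zero, one_pow] at hsep
  refine tendsto_nhds_unique (tendsto_measure_iUnion_atTop (separatedBy_mono X i)) ?_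
  simpa only [Function.comp_def, measure_separatedBy hmeas hindep hfair] using hsep

end Trie

theorem stmt19_general {Ω : Type*} [MeasurableSpace Ω] (μ : Measure Ω) [IsProbabilityMeasure μ]
    (n : ℕ)
    (X : Fin n → Ω → ℕ → Bool)
    (hmeas : ∀ (i : Fin n) (k : ℕ), Measurable fun ω => X i ω k)
    (hindep : iIndepFun
      (fun p : Fin n × ℕ => fun ω => X p.1 ω p.2) μ)
    (hfair : ∀ (i : Fin n) (k : ℕ), μ {ω | X i ω k = true} = 1 / 2)
    (D : Fin n → Ω → ℕ)
    (hD : ∀ i ω, D i ω = sInf {ℓ : ℕ | ∀ j, j ≠ i → ∃ m < ℓ, X i ω m ≠ X j ω m}) :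
    (∀ i, μ {ω | ∃ ℓ : ℕ, ∀ j, j ≠ i → ∃ m < ℓ, X i ω m ≠ X j ω m} = 1) ∧
    ∫⁻ ω, ∑ i, (D i ω : ℝ≥0∞) ∂μ
      = ENNReal.ofReal ((n : ℝ) *
          ∑' k : ℕ, (1 - (1 - ((1 : ℝ) / 2) ^ k) ^ (n - 1))) := by
  have hfull := measure_iUnion_separatedBy hmeas hindep hfair
  refine ⟨fun i => by rw [Set.ofPred_exists]; exact hfull i, ?_⟩
  obtain rfl : D = fun i ω => sInf {ℓ | ω ∈ separatedBy X i ℓ} := funext fun i => funext (hD i)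
  have hdepth (i : Fin n) : ∫⁻ ω, (sInf {ℓ | ω ∈ separatedBy X i ℓ} : ℕ) ∂μ
      = ∑' k, (1 - (1 - 2⁻¹ ^ k) ^ (n - 1)) := by
    rw [lintegral_sInf_mem (separatedBy_mono X i) (measurableSet_separatedBy hmeas i)]
    refine tsum_congr fun k => ?_
    rw [measure_sdiff (Set.subset_iUnion _ k)
      (measurableSet_separatedBy hmeas i k).nullMeasurableSet (measure_ne_top μ _), hfull i,
      measure_separatedBy hmeas hindep hfair]
  have hmeasD (i : Fin n) :
      Measurable fun ω => ((sInf {ℓ | ω ∈ separatedBy X i ℓ} : ℕ) : ℝ≥0∞) :=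
    measurable_from_nat.comp
      (measurable_sInf_mem (separatedBy_mono X i) (measurableSet_separatedBy hmeas i))
  beta_reduce
  rw [lintegral_finsetSum _ fun i _ => hmeasD i,
    sum_congr rfl fun i _ => hdepth i, sum_const, card_univ, Fintype.card_fin, nsmul_eq_mul,
    ENNReal.ofReal_mul n.cast_nonneg, ENNReal.ofReal_natCast,
    ENNReal.ofReal_tsum_of_nonneg (one_sub_one_sub_half_pow_pow_nonneg · _)
      (summable_one_sub_one_sub_half_pow_pow _)]
  simp only [ofReal_one_sub_one_sub_half_pow_pow]

/-- Expected path length of a random trie.  Let `X₁,…,Xₙ` (`n ≥ 2`) be random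
infinite binary strings whose bits are all independent and fair.  Let `Dᵢ` be the
depth of key `i` in the trie, i.e. the least `ℓ` such that the first `ℓ` bits of
`Xᵢ` differ (as a vector) from the first `ℓ` bits of every other `Xⱼ`.  Then each
`Dᵢ` is a.s. finite and the expected path length is
`E[D₁ + ⋯ + Dₙ] = n ∑_{k≥0} (1 - (1 - 2^{-k})^{n-1})`, which is finite. -/
theorem stmt19 {Ω : Type*} [MeasurableSpace Ω] (μ : Measure Ω) [IsProbabilityMeasure μ]
    (n : ℕ) (hn : 2 ≤ n)
    (X : Fin n → Ω → ℕ → Bool)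
    (hmeas : ∀ (i : Fin n) (k : ℕ), Measurable fun ω => X i ω k)
    (hindep : iIndepFun
      (fun p : Fin n × ℕ => fun ω => X p.1 ω p.2) μ)
    (hfair : ∀ (i : Fin n) (k : ℕ), μ {ω | X i ω k = true} = 1 / 2)
    (D : Fin n → Ω → ℕ)
    (hD : ∀ i ω, D i ω = sInf {ℓ : ℕ | ∀ j, j ≠ i → ∃ m < ℓ, X i ω m ≠ X j ω m}) :
    (∀ i, μ {ω | ∃ ℓ : ℕ, ∀ j, j ≠ i → ∃ m < ℓ, X i ω m ≠ X j ω m} = 1) ∧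
    ∫⁻ ω, ∑ i, (D i ω : ℝ≥0∞) ∂μ
      = ENNReal.ofReal ((n : ℝ) *
          ∑' k : ℕ, (1 - (1 - ((1 : ℝ) / 2) ^ k) ^ (n - 1))) :=
  stmt19_general μ n X hmeas hindep hfair D hD
end
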